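/- arXiv:1806.05702 — 2 statements merged into one kernel-verified Lean document; each statement's English description precedes it below -/
import Mathlib

section
/- For 0 < H < 1, the uniform maximum over the class 𝔛^H of signed Takagi–Landsberg functions is attained by x^H: sup over x ∈ 𝔛^H of the maximum of x on [0,1] equals 1/(3(1 − 2^{−H})). -/
open Filter Finset Set MeasureTheory ProbabilityTheory

noncomputable def e00 (t : ℝ) : ℝ := max (min t (1 - t)) 0

noncomputable def fs (m : ℕ) (k : ℤ) (t : ℝ) : ℝ :=
  (2 : ℝ) ^ (-(m : ℝ) / 2) * e00 ((2 : ℝ) ^ m * t - (k : ℝ))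

def IsSign (θ : ℕ → ℕ → ℝ) : Prop := ∀ m k, θ m k = 1 ∨ θ m k = -1

noncomputable def tlTerm (H : ℝ) (θ : ℕ → ℕ → ℝ) (m : ℕ) (t : ℝ) : ℝ :=
  (2 : ℝ) ^ ((m : ℝ) * (1 / 2 - H)) *
    ∑ k ∈ Finset.range (2 ^ m), θ m k * fs m (k : ℤ) t

noncomputable def sPartial (H : ℝ) (θ : ℕ → ℕ → ℝ) (n : ℕ) (t : ℝ) : ℝ :=
  ∑ m ∈ Finset.range n, tlTerm H θ m t

def MemX (H : ℝ) (x : ℝ → ℝ) : Prop :=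
  ∃ θ : ℕ → ℕ → ℝ, IsSign θ ∧ ∀ t : ℝ, x t = ∑' m : ℕ, tlTerm H θ m t

noncomputable def xTL (H : ℝ) (t : ℝ) : ℝ := ∑' m : ℕ, tlTerm H (fun _ _ => 1) m t

noncomputable def dyadicSum (p : ℝ) (x : ℝ → ℝ) (n : ℕ) (t : ℝ) : ℝ :=
  ∑ k ∈ Finset.range (2 ^ n),
    if (k : ℝ) / 2 ^ n ≤ t then |x (((k : ℝ) + 1) / 2 ^ n) - x ((k : ℝ) / 2 ^ n)| ^ p else 0

noncomputable def nuFloor (h : ℝ) : ℤ := ⌊-(Real.logb 2 h)⌋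

noncomputable def omegaH (H h : ℝ) : ℝ :=
  h * (2 : ℝ) ^ (((nuFloor h : ℝ) - 1) * (1 - H)) / ((2 : ℝ) ^ (1 - H) - 1) +
    (2 : ℝ) ^ ((1 - (nuFloor h : ℝ)) * H) / (3 * (1 - (2 : ℝ) ^ (-H)))

/-!
On `[0, 1]` the Faber–Schauder functions of level `m` add up to `2^(-m/2) δ(2^m t)`, where `δ` is
the distance to the nearest integer, and `δ(2^m t) = T^m (δ t)` for the tent map
`T d = min (2d) (1 - 2d)`. So every signed function is dominated by `x^H`, and
`x^H(t) = ∑ a^m T^m (δ t)` with `a = 2^(-H) ∈ (1/2, 1)`; as `T` fixes `1/3`,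
`x^H(1/3) = M := 1/(3(1 - a))`.

For the upper bound let `c_k(d)` be the bound on the orbit sum from `d` obtained by following `k`
doublings `d, 2d, …` and then bounding the rest by `M`, and call `x` a tent bound at `d` if
`x ≤ c_k(d)` and `x ≤ d + a c_k(1 - 2d)` for all `k`. Zero is a tent bound, a tent bound `x` at
`T d` gives the tent bound `d + a x` at `d`, so all partial orbit sums are tent bounds; and for
`a > 1/2` every tent bound is at most `M`.
-/

noncomputable def tent (d : ℝ) : ℝ := min (2 * d) (1 - 2 * d)

lemma mapsTo_tent : MapsTo tent (Icc (0 : ℝ) (1 / 2)) (Icc 0 (1 / 2)) := by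
  rintro d ⟨h0, h1⟩
  unfold tent
  constructor <;> rcases le_total (2 * d) (1 - 2 * d) with h | h <;>
    simp only [min_eq_left, min_eq_right, h] <;> linarith

lemma tent_one_third : tent (1 / 3) = 1 / 3 := by norm_num [tent]

lemma abs_two_mul_sub_round (x : ℝ) : |2 * x - round (2 * x)| = tent |x - round x| := by
  have h0 := Int.fract_nonneg x
  have h1 := Int.fract_lt_one x
  have hfract : Int.fract (2 * x) = 2 * Int.fract x - if Int.fract x < 1 / 2 then 0 else 1 := by
    rw [Int.fract_eq_iff]
    refine ⟨by split_ifs <;> linarith, by split_ifs <;> linarith,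
      2 * ⌊x⌋ + if Int.fract x < 1 / 2 then 0 else 1, ?_⟩
    rw [← Int.self_sub_floor x]
    split_ifs <;> push_cast <;> ring
  rw [abs_sub_round_eq_min, abs_sub_round_eq_min, hfract, tent]
  split_ifs with h <;> simp only [min_def] <;> split_ifs <;> linarith

lemma abs_two_pow_mul_sub_round (m : ℕ) (x : ℝ) :
    |2 ^ m * x - round (2 ^ m * x)| = tent^[m] |x - round x| := by
  induction m with
  | zero => simp
  | succ m ih => rw [pow_succ', mul_assoc, abs_two_mul_sub_round, ih, Function.iterate_succ_apply']

noncomputable def tentMax (a : ℝ) : ℝ := 1 / (3 * (1 - a))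

noncomputable def tentChain (a : ℝ) : ℕ → ℝ → ℝ
  | 0, d => d + a * tentMax a
  | k + 1, d => d + a * tentChain a k (2 * d)

def IsTentBound (a x d : ℝ) : Prop :=
  ∀ k, x ≤ tentChain a k d ∧ x ≤ d + a * tentChain a k (1 - 2 * d)

section TentBound

variable {a : ℝ}

lemma tentMax_eq (ha : a < 1) : 1 / 3 + a * tentMax a = tentMax a := by
  have : 1 - a ≠ 0 := by linarith
  unfold tentMax
  field_simp
  ring

lemma tentMax_nonneg (ha : a < 1) : 0 ≤ tentMax a := by
  have : 0 < 1 - a := by linarith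
  unfold tentMax
  positivity

lemma tentChain_mono (ha : 0 ≤ a) (k : ℕ) : Monotone (tentChain a k) := by
  induction k with
  | zero => exact fun d e hde => by simp only [tentChain]; linarith
  | succ k ih =>
    intro d e hde
    have := ih (show 2 * d ≤ 2 * e by linarith)
    simp only [tentChain]
    nlinarith

lemma tentChain_nonneg (ha0 : 0 ≤ a) (ha1 : a < 1) (k : ℕ) {d : ℝ} (hd : 0 ≤ d) :
    0 ≤ tentChain a k d := by
  induction k generalizing d with
  | zero => simp only [tentChain]; have := tentMax_nonneg ha1; positivity
  | succ k ih => simp only [tentChain]; have := ih (show 0 ≤ 2 * d by linarith); positivity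

lemma isTentBound_zero (ha0 : 0 ≤ a) (ha1 : a < 1) {d : ℝ} (hd : d ∈ Icc (0 : ℝ) (1 / 2)) :
    IsTentBound a 0 d := fun k =>
  ⟨tentChain_nonneg ha0 ha1 k hd.1, by
    have := tentChain_nonneg ha0 ha1 k (show 0 ≤ 1 - 2 * d by linarith [hd.2])
    nlinarith [hd.1]⟩

lemma IsTentBound.le_tentMax (ha0 : 1 / 2 < a) (ha1 : a < 1) {x d : ℝ}
    (hx : IsTentBound a x d) : x ≤ tentMax a := by
  have hM := tentMax_eq ha1
  rcases le_total d (1 / 3) with h | h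
  · have := (hx 0).1
    simp only [tentChain] at this
    linarith
  · -- as `2 * a > 1`, `d + a * (1 - 2 * d)` decreases in `d`, so is at most its value at `1 / 3`
    have := (hx 0).2
    simp only [tentChain] at this
    nlinarith

lemma IsTentBound.step (ha0 : 1 / 2 < a) (ha1 : a < 1) {x d : ℝ}
    (hx : IsTentBound a x (tent d)) : IsTentBound a (d + a * x) d := by
  refine fun k => ⟨?_, ?_⟩
  · cases k with
    | zero =>
      have := hx.le_tentMax ha0 ha1
      simp only [tentChain]
      nlinarith
    | succ k =>
      have := (hx k).1.trans (tentChain_mono (by linarith) k (min_le_left _ _))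
      simp only [tentChain]
      nlinarith
  · have := (hx k).1.trans (tentChain_mono (by linarith) k (min_le_right _ _))
    nlinarith

lemma isTentBound_sum_range (ha0 : 1 / 2 < a) (ha1 : a < 1) (n : ℕ) {d : ℝ}
    (hd : d ∈ Icc (0 : ℝ) (1 / 2)) :
    IsTentBound a (∑ m ∈ range n, a ^ m * tent^[m] d) d := by
  induction n generalizing d with
  | zero => simpa using isTentBound_zero (by linarith) ha1 hd
  | succ n ih =>
    have hsum : ∑ m ∈ range (n + 1), a ^ m * tent^[m] d
        = d + a * ∑ m ∈ range n, a ^ m * tent^[m] (tent d) := by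
      rw [sum_range_succ', mul_sum, add_comm, pow_zero, one_mul, Function.iterate_zero_apply]
      congr 1
      exact sum_congr rfl fun m _ => by rw [Function.iterate_succ_apply, pow_succ]; ring
    rw [hsum]
    exact (ih (mapsTo_tent hd)).step ha0 ha1

lemma summable_pow_mul_tent_iterate (ha0 : 0 ≤ a) (ha1 : a < 1) {d : ℝ}
    (hd : d ∈ Icc (0 : ℝ) (1 / 2)) : Summable fun m => a ^ m * tent^[m] d := by
  have hT (m : ℕ) : tent^[m] d ∈ Icc (0 : ℝ) (1 / 2) := mapsTo_tent.iterate m hd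
  refine ((summable_geometric_of_lt_one ha0 ha1).mul_right (1 / 2)).of_nonneg_of_le
    (fun m => mul_nonneg (pow_nonneg ha0 m) (hT m).1)
    (fun m => mul_le_mul_of_nonneg_left (hT m).2 (pow_nonneg ha0 m))

lemma tsum_pow_mul_tent_iterate_le (ha0 : 1 / 2 < a) (ha1 : a < 1) {d : ℝ}
    (hd : d ∈ Icc (0 : ℝ) (1 / 2)) : ∑' m, a ^ m * tent^[m] d ≤ tentMax a :=
  (summable_pow_mul_tent_iterate (by linarith) ha1 hd).tsum_le_of_sum_range_le fun n =>
    (isTentBound_sum_range ha0 ha1 n hd).le_tentMax ha0 ha1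

end TentBound

lemma e00_of_nonpos {y : ℝ} (hy : y ≤ 0) : e00 y = 0 :=
  max_eq_right ((min_le_left _ _).trans hy)

lemma e00_of_one_le {y : ℝ} (hy : 1 ≤ y) : e00 y = 0 :=
  max_eq_right ((min_le_right _ _).trans (by linarith))

lemma e00_fract (x : ℝ) : e00 (Int.fract x) = |x - round x| := by
  rw [abs_sub_round_eq_min, e00, max_eq_left]
  exact le_min (Int.fract_nonneg x) (by linarith [Int.fract_lt_one x])

lemma sum_range_e00_sub {x : ℝ} {n : ℕ} (hx0 : 0 ≤ x) (hxn : x ≤ n) :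
    ∑ k ∈ range n, e00 (x - k) = |x - round x| := by
  have hfloor : (⌊x⌋₊ : ℝ) = ⌊x⌋ := by exact_mod_cast Int.natCast_floor_eq_floor hx0
  rw [sum_eq_single ⌊x⌋₊, hfloor, ← Int.fract, e00_fract]
  · intro k _ hk
    rcases lt_or_gt_of_ne hk with hlt | hgt
    · have : (k : ℝ) + 1 ≤ ⌊x⌋₊ := by exact_mod_cast hlt
      exact e00_of_one_le (by linarith [Nat.floor_le hx0])
    · have : (⌊x⌋₊ : ℝ) + 1 ≤ k := by exact_mod_cast hgt
      exact e00_of_nonpos (by linarith [Nat.lt_floor_add_one x])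
  · intro hfloor_mem
    have hn : (n : ℝ) ≤ ⌊x⌋₊ := by exact_mod_cast not_lt.1 (mem_range.not.1 hfloor_mem)
    have hx : x = n := le_antisymm hxn (hn.trans (Nat.floor_le hx0))
    simp [hx, e00]

lemma sum_range_fs (m : ℕ) {t : ℝ} (ht : t ∈ Icc (0 : ℝ) 1) :
    ∑ k ∈ range (2 ^ m), fs m k t = 2 ^ (-(m : ℝ) / 2) * |2 ^ m * t - round (2 ^ m * t)| := by
  simp only [fs, Int.cast_natCast, ← mul_sum]
  have hpow : (0 : ℝ) < 2 ^ m := by positivity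
  rw [sum_range_e00_sub (by positivity [ht.1]) (by push_cast; nlinarith [ht.2])]

lemma tlTerm_const_one (H : ℝ) (m : ℕ) {t : ℝ} (ht : t ∈ Icc (0 : ℝ) 1) :
    tlTerm H (fun _ _ => 1) m t = (2 ^ (-H)) ^ m * tent^[m] |t - round t| := by
  have hcoeff : (2 : ℝ) ^ ((m : ℝ) * (1 / 2 - H)) * 2 ^ (-(m : ℝ) / 2) = (2 ^ (-H)) ^ m := by
    rw [← Real.rpow_natCast, ← Real.rpow_mul zero_le_two, ← Real.rpow_add two_pos]
    ring_nf
  simp only [tlTerm, one_mul]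
  rw [sum_range_fs m ht, ← mul_assoc, hcoeff, abs_two_pow_mul_sub_round]

lemma abs_tlTerm_le {θ : ℕ → ℕ → ℝ} (hθ : IsSign θ) (H : ℝ) (m : ℕ) (t : ℝ) :
    |tlTerm H θ m t| ≤ tlTerm H (fun _ _ => 1) m t := by
  have hfs (k : ℤ) : 0 ≤ fs m k t := by unfold fs e00; positivity
  have hθ_abs (k : ℕ) : |θ m k| = 1 := by rcases hθ m k with h | h <;> simp [h]
  simp only [tlTerm, one_mul, abs_mul, Real.abs_rpow_of_nonneg zero_le_two, abs_two]
  gcongr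
  exact (abs_sum_le_sum_abs _ _).trans_eq
    (sum_congr rfl fun k _ => by rw [abs_mul, hθ_abs, one_mul, abs_of_nonneg (hfs k)])

lemma two_rpow_neg_lt_one {H : ℝ} (hH : 0 < H) : (2 : ℝ) ^ (-H) < 1 :=
  Real.rpow_lt_one_of_one_lt_of_neg one_lt_two (neg_neg_of_pos hH)

lemma half_lt_two_rpow_neg {H : ℝ} (hH : H < 1) : 1 / 2 < (2 : ℝ) ^ (-H) := by
  rw [one_div, ← Real.rpow_neg_one]
  exact Real.rpow_lt_rpow_of_exponent_lt one_lt_two (by linarith)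

lemma summable_tlTerm_const_one {H : ℝ} (hH : 0 < H) {t : ℝ} (ht : t ∈ Icc (0 : ℝ) 1) :
    Summable fun m => tlTerm H (fun _ _ => 1) m t := by
  simp only [tlTerm_const_one H _ ht]
  exact summable_pow_mul_tent_iterate (by positivity) (two_rpow_neg_lt_one hH)
    ⟨abs_nonneg _, abs_sub_round t⟩

lemma tsum_tlTerm_le_xTL {H : ℝ} (hH : 0 < H) {θ : ℕ → ℕ → ℝ} (hθ : IsSign θ) {t : ℝ}
    (ht : t ∈ Icc (0 : ℝ) 1) : ∑' m, tlTerm H θ m t ≤ xTL H t := by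
  have hsum := summable_tlTerm_const_one hH ht
  exact (hsum.of_norm_bounded fun m => abs_tlTerm_le hθ H m t).tsum_le_tsum
    (fun m => (le_abs_self _).trans (abs_tlTerm_le hθ H m t)) hsum

lemma xTL_le_tentMax {H : ℝ} (hH : H ∈ Ioo (0 : ℝ) 1) {t : ℝ} (ht : t ∈ Icc (0 : ℝ) 1) :
    xTL H t ≤ tentMax (2 ^ (-H)) := by
  simp only [xTL, tlTerm_const_one H _ ht]
  exact tsum_pow_mul_tent_iterate_le (half_lt_two_rpow_neg hH.2) (two_rpow_neg_lt_one hH.1)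
    ⟨abs_nonneg _, abs_sub_round t⟩

lemma xTL_one_third {H : ℝ} (hH : 0 < H) : xTL H (1 / 3) = tentMax (2 ^ (-H)) := by
  have hthird : |(1 / 3 : ℝ) - round (1 / 3 : ℝ)| = 1 / 3 := by norm_num [round_eq]
  have hterm (m : ℕ) : tlTerm H (fun _ _ => 1) m (1 / 3) = (2 ^ (-H)) ^ m * (1 / 3) := by
    rw [tlTerm_const_one H m ⟨by norm_num, by norm_num⟩, hthird,
      Function.iterate_fixed tent_one_third]
  have ha := two_rpow_neg_lt_one hH
  rw [xTL, tsum_congr hterm, tsum_mul_right, tsum_geometric_of_lt_one (by positivity) ha, tentMax]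
  field_simp

theorem stmt5 (H : ℝ) (hH : H ∈ Set.Ioo (0:ℝ) 1) :
    MemX H (xTL H) ∧
    IsGreatest {y : ℝ | ∃ x t, MemX H x ∧ t ∈ Set.Icc (0:ℝ) 1 ∧ y = x t}
      (1 / (3 * (1 - (2:ℝ) ^ (-H)))) := by
  have hmem : MemX H (xTL H) := ⟨fun _ _ => 1, fun _ _ => Or.inl rfl, fun _ => rfl⟩
  refine ⟨hmem, ⟨xTL H, 1 / 3, hmem, ⟨by norm_num, by norm_num⟩, (xTL_one_third hH.1).symm⟩, ?_⟩
  rintro y ⟨x, t, ⟨θ, hθ, hx⟩, ht, rfl⟩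
  rw [hx t]
  exact (tsum_tlTerm_le_xTL hH.1 hθ ht).trans (xTL_le_tentMax hH ht)
end

section
/- Let H ∈ (0,1), x ∈ 𝔛^H, and p > 1/H. Then for all t ∈ (0,1], lim_{n→∞} Σ_{s ∈ 𝕋_n, s ≤ t} |x(s′) − x(s)|^p = 0. -/
/-!
The `m`-th Faber–Schauder level of `x` is `(2 ^ (-H)) ^ m` times a combination of unit tents in
the variable `2 ^ m t`. It is bounded by `(2 ^ (-H)) ^ m / 2`, and for `m ≤ n` a single tent covers
each interval of `𝕋ₙ`, so its increment there is at most `(2 ^ (1 - H)) ^ m / 2 ^ n`. Summing the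
coarse levels (a geometric series dominated by its last term, as `2 ^ (1 - H) > 1`) and the fine
ones (a geometric tail) bounds the increments of `x` over `𝕋ₙ` by `O(2 ^ (-n H))`. The `2 ^ n`
increments then contribute `O(2 ^ (n (1 - H p)))`, which tends to `0` because `H p > 1`.
-/

open Filter Finset Set MeasureTheory ProbabilityTheory

noncomputable def tentSum (c : ℕ → ℝ) (N : ℕ) (u : ℝ) : ℝ :=
  ∑ k ∈ range N, c k * e00 (u - k)

lemma e00_nonneg (t : ℝ) : 0 ≤ e00 t := le_max_right _ _

lemma abs_e00_sub_e00_le (a b : ℝ) : |e00 a - e00 b| ≤ |a - b| := by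
  refine (abs_max_sub_max_le_abs _ _ _).trans ((abs_min_sub_min_le_max _ _ _ _).trans ?_)
  rw [show (1 - a) - (1 - b) = -(a - b) by ring, abs_neg, max_self]

lemma e00_eq_zero {t : ℝ} (h : t ≤ 0 ∨ 1 ≤ t) : e00 t = 0 := by
  refine max_eq_right ?_
  rcases h with h | h
  · exact (min_le_left _ _).trans h
  · exact (min_le_right _ _).trans (by linarith)

lemma e00_sub_intCast_eq_zero {j k : ℤ} {w : ℝ} (hw : w ∈ Icc (j : ℝ) (j + 1)) (hk : k ≠ j) :
    e00 (w - k) = 0 := by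
  apply e00_eq_zero
  rcases hk.lt_or_gt with h | h
  · have : (k : ℝ) + 1 ≤ j := by exact_mod_cast h
    right; linarith [hw.1]
  · have : (j : ℝ) + 1 ≤ k := by exact_mod_cast h
    left; linarith [hw.2]

lemma tentSum_intCast (c : ℕ → ℝ) (N : ℕ) (j : ℤ) : tentSum c N j = 0 := by
  refine Finset.sum_eq_zero fun k _ => ?_
  rw [show (j : ℝ) - k = ((j - k : ℤ) : ℝ) by push_cast; ring, e00_eq_zero, mul_zero]
  rcases le_or_gt (j - k) 0 with h | h
  · left; exact_mod_cast h
  · right; exact_mod_cast h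

/-- On each interval `[j, j + 1]` only the tent supported on it contributes. -/
lemma abs_tentSum_sub_le {c : ℕ → ℝ} (hc : ∀ k, |c k| ≤ 1) (N : ℕ) {j : ℤ} {u v : ℝ}
    (hu : u ∈ Icc (j : ℝ) (j + 1)) (hv : v ∈ Icc (j : ℝ) (j + 1)) :
    |tentSum c N u - tentSum c N v| ≤ |u - v| := by
  have hvanish : ∀ k ∈ range N, k ≠ j.toNat →
      c k * e00 (u - k) - c k * e00 (v - k) = 0 := by
    intro k _ hk
    have hkj : (k : ℤ) ≠ j := by omega
    have hzero := fun w (hw : w ∈ Icc (j : ℝ) (j + 1)) => e00_sub_intCast_eq_zero hw hkj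
    simp only [Int.cast_natCast] at hzero
    rw [hzero u hu, hzero v hv]
    ring
  unfold tentSum
  rw [← Finset.sum_sub_distrib]
  by_cases hj : j.toNat ∈ range N
  · rw [Finset.sum_eq_single_of_mem _ hj hvanish, ← mul_sub, abs_mul]
    calc |c j.toNat| * |e00 (u - j.toNat) - e00 (v - j.toNat)|
        ≤ 1 * |(u - j.toNat) - (v - j.toNat)| :=
          mul_le_mul (hc _) (abs_e00_sub_e00_le _ _) (abs_nonneg _) zero_le_one
      _ = |u - v| := by rw [one_mul, sub_sub_sub_cancel_right]
  · rw [Finset.sum_eq_zero fun k hk => hvanish k hk (by rintro rfl; exact hj hk), abs_zero]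
    exact abs_nonneg _

lemma abs_tentSum_le {c : ℕ → ℝ} (hc : ∀ k, |c k| ≤ 1) (N : ℕ) (u : ℝ) :
    |tentSum c N u| ≤ 1 / 2 := by
  have hu : u ∈ Icc (⌊u⌋ : ℝ) (⌊u⌋ + 1) := ⟨Int.floor_le u, (Int.lt_floor_add_one u).le⟩
  have h₀ := abs_tentSum_sub_le hc N hu (Set.left_mem_Icc.2 (by linarith))
  have h₁ := abs_tentSum_sub_le hc N hu (Set.right_mem_Icc.2 (by linarith))
  rw [tentSum_intCast, sub_zero] at h₀
  rw [show (⌊u⌋ : ℝ) + 1 = ((⌊u⌋ + 1 : ℤ) : ℝ) by push_cast; ring, tentSum_intCast, sub_zero] at h₁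
  push_cast at h₁
  rw [abs_of_nonneg (sub_nonneg.2 hu.1)] at h₀
  rw [abs_of_nonpos (sub_nonpos.2 hu.2)] at h₁
  linarith

lemma tlTerm_eq_tentSum (H : ℝ) (θ : ℕ → ℕ → ℝ) (m : ℕ) (t : ℝ) :
    tlTerm H θ m t = (2 ^ (-H) : ℝ) ^ m * tentSum (θ m) (2 ^ m) (2 ^ m * t) := by
  have hscale : (2 : ℝ) ^ ((m : ℝ) * (1 / 2 - H)) * 2 ^ (-(m : ℝ) / 2) = (2 ^ (-H)) ^ m := by
    rw [← Real.rpow_add two_pos, ← Real.rpow_mul_natCast zero_le_two]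
    ring_nf
  simp only [tlTerm, tentSum, fs, Int.cast_natCast, Finset.mul_sum, ← hscale]
  exact Finset.sum_congr rfl fun k _ => by ring

lemma abs_tlTerm_le_s15 (H : ℝ) {θ : ℕ → ℕ → ℝ} (hθ : ∀ m k, |θ m k| ≤ 1) (m : ℕ) (t : ℝ) :
    |tlTerm H θ m t| ≤ (2 ^ (-H) : ℝ) ^ m / 2 := by
  rw [tlTerm_eq_tentSum, abs_mul, abs_of_nonneg (by positivity), div_eq_mul_one_div]
  exact mul_le_mul_of_nonneg_left (abs_tentSum_le (hθ m) _ _) (by positivity)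

lemma exists_Icc_dyadic_mem {m n : ℕ} (hmn : m ≤ n) (k : ℕ) :
    ∃ j : ℤ, (2 : ℝ) ^ m * (k / 2 ^ n) ∈ Icc (j : ℝ) (j + 1) ∧
      (2 : ℝ) ^ m * ((k + 1) / 2 ^ n) ∈ Icc (j : ℝ) (j + 1) := by
  obtain ⟨d, rfl⟩ := Nat.exists_eq_add_of_le hmn
  have hD : 0 < 2 ^ d := Nat.two_pow_pos d
  have hlo : (k / 2 ^ d : ℕ) * (2 : ℝ) ^ d ≤ k := by exact_mod_cast Nat.div_mul_le_self k _
  have hhi : (k : ℝ) + 1 ≤ ((k / 2 ^ d : ℕ) + 1) * 2 ^ d := by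
    exact_mod_cast (Nat.div_lt_iff_lt_mul hD).1 (Nat.lt_succ_self _)
  have hscale : ∀ y : ℝ, (2 : ℝ) ^ m * (y / 2 ^ (m + d)) = y / 2 ^ d := fun y => by
    rw [pow_add]; field_simp
  refine ⟨(k / 2 ^ d : ℕ), ?_, ?_⟩ <;>
    simp only [hscale, Int.cast_natCast, Set.mem_Icc, le_div_iff₀ (by positivity : (0 : ℝ) < 2 ^ d),
      div_le_iff₀ (by positivity : (0 : ℝ) < 2 ^ d)] <;>
    constructor <;> linarith

lemma abs_tlTerm_sub_le (H : ℝ) {θ : ℕ → ℕ → ℝ} (hθ : ∀ m k, |θ m k| ≤ 1) {m n : ℕ}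
    (hmn : m ≤ n) (k : ℕ) :
    |tlTerm H θ m ((k + 1) / 2 ^ n) - tlTerm H θ m (k / 2 ^ n)| ≤
      (2 * 2 ^ (-H) : ℝ) ^ m / 2 ^ n := by
  obtain ⟨j, hk, hk₁⟩ := exists_Icc_dyadic_mem hmn k
  rw [tlTerm_eq_tentSum, tlTerm_eq_tentSum, ← mul_sub, abs_mul, abs_of_nonneg (by positivity)]
  calc (2 ^ (-H) : ℝ) ^ m * |tentSum (θ m) (2 ^ m) (2 ^ m * ((k + 1) / 2 ^ n)) -
        tentSum (θ m) (2 ^ m) (2 ^ m * (k / 2 ^ n))|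
      ≤ (2 ^ (-H) : ℝ) ^ m * |(2 : ℝ) ^ m * ((k + 1) / 2 ^ n) - 2 ^ m * (k / 2 ^ n)| :=
        mul_le_mul_of_nonneg_left (abs_tentSum_sub_le (hθ m) _ hk₁ hk) (by positivity)
    _ = (2 * 2 ^ (-H) : ℝ) ^ m / 2 ^ n := by
        rw [← mul_sub, ← sub_div, add_sub_cancel_left, abs_of_pos (by positivity), mul_pow]
        ring

lemma sum_two_mul_pow_div_le {r : ℝ} (hr : 1 / 2 < r) (n : ℕ) :
    ∑ m ∈ range n, (2 * r) ^ m / 2 ^ n ≤ r ^ n / (2 * r - 1) := by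
  have hpos : 0 < 2 * r - 1 := by linarith
  rw [← Finset.sum_div, geom_sum_eq (by linarith), div_div, mul_pow,
    div_le_div_iff₀ (by positivity) hpos]
  nlinarith [pow_pos (by linarith : (0 : ℝ) < r) n, pow_pos (by norm_num : (0 : ℝ) < 2) n]

lemma abs_tsum_sub_tsum_le {r : ℝ} (hr₀ : 1 / 2 < r) (hr₁ : r < 1) {u v : ℕ → ℝ} {n : ℕ}
    (hu : ∀ m, |u m| ≤ r ^ m / 2) (hv : ∀ m, |v m| ≤ r ^ m / 2)
    (huv : ∀ m < n, |u m - v m| ≤ (2 * r) ^ m / 2 ^ n) :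
    |∑' m, u m - ∑' m, v m| ≤ (1 / (2 * r - 1) + 1 / (1 - r)) * r ^ n := by
  have hgeom := hasSum_geometric_of_lt_one (by linarith) hr₁
  have hsum : ∀ w : ℕ → ℝ, (∀ m, |w m| ≤ r ^ m / 2) → Summable w := fun w hw =>
    .of_norm_bounded (hgeom.summable.div_const 2) hw
  have hdiff : ∀ m, |u m - v m| ≤ r ^ m := fun m => by
    linarith [abs_sub (u m) (v m), hu m, hv m]
  have head : |∑ m ∈ range n, (u m - v m)| ≤ r ^ n / (2 * r - 1) :=
    (Finset.abs_sum_le_sum_abs _ _).trans <| (Finset.sum_le_sum fun m hm =>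
      huv m (Finset.mem_range.1 hm)).trans (sum_two_mul_pow_div_le hr₀ n)
  have tail : |∑' m, (u (m + n) - v (m + n))| ≤ r ^ n * (1 - r)⁻¹ :=
    tsum_of_norm_bounded (f := fun m => u (m + n) - v (m + n)) (hgeom.mul_left (r ^ n)) fun m => by
      simpa only [Real.norm_eq_abs, pow_add, mul_comm] using hdiff (m + n)
  rw [← (hsum u hu).tsum_sub (hsum v hv), ← ((hsum u hu).sub (hsum v hv)).sum_add_tsum_nat_add n]
  calc |∑ m ∈ range n, (u m - v m) + ∑' m, (u (m + n) - v (m + n))|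
      ≤ r ^ n / (2 * r - 1) + r ^ n * (1 - r)⁻¹ := (abs_add_le _ _).trans (add_le_add head tail)
    _ = (1 / (2 * r - 1) + 1 / (1 - r)) * r ^ n := by ring

lemma IsSign.abs_le_one {θ : ℕ → ℕ → ℝ} (hθ : IsSign θ) (m k : ℕ) : |θ m k| ≤ 1 := by
  rcases hθ m k with h | h <;> simp [h]

lemma MemX.abs_sub_le {H : ℝ} (hH : H ∈ Set.Ioo 0 1) {x : ℝ → ℝ} (hx : MemX H x) (n k : ℕ) :
    |x ((k + 1) / 2 ^ n) - x (k / 2 ^ n)| ≤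
      (1 / (2 * 2 ^ (-H) - 1) + 1 / (1 - 2 ^ (-H))) * ((2 : ℝ) ^ (-H)) ^ n := by
  obtain ⟨θ, hθ, hxθ⟩ := hx
  have hr₀ : 1 / 2 < (2 : ℝ) ^ (-H) := by
    rw [one_div, ← Real.rpow_neg_one 2]
    exact Real.rpow_lt_rpow_of_exponent_lt one_lt_two (by linarith [hH.2])
  have hr₁ : (2 : ℝ) ^ (-H) < 1 := Real.rpow_lt_one_of_one_lt_of_neg one_lt_two (by linarith [hH.1])
  rw [hxθ, hxθ]
  exact abs_tsum_sub_tsum_le hr₀ hr₁ (abs_tlTerm_le_s15 H hθ.abs_le_one · _)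
    (abs_tlTerm_le_s15 H hθ.abs_le_one · _) fun m hm => abs_tlTerm_sub_le H hθ.abs_le_one hm.le k

lemma dyadicSum_nonneg {p : ℝ} (x : ℝ → ℝ) (n : ℕ) (t : ℝ) : 0 ≤ dyadicSum p x n t :=
  Finset.sum_nonneg fun _ _ => by split_ifs <;> positivity

lemma dyadicSum_le {p : ℝ} (hp : 0 ≤ p) {x : ℝ → ℝ} {n : ℕ} {M : ℝ}
    (hx : ∀ k : ℕ, |x ((k + 1) / 2 ^ n) - x (k / 2 ^ n)| ≤ M) (t : ℝ) :
    dyadicSum p x n t ≤ 2 ^ n * M ^ p := by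
  have hM : 0 ≤ M := (abs_nonneg _).trans (hx 0)
  calc dyadicSum p x n t ≤ ∑ _k ∈ range (2 ^ n), M ^ p :=
        Finset.sum_le_sum fun k _ => by
          split_ifs
          · exact Real.rpow_le_rpow (abs_nonneg _) (hx k) hp
          · positivity
    _ = 2 ^ n * M ^ p := by simp

lemma tendsto_dyadicSum_zero {p C r : ℝ} (hp : 0 ≤ p) (hr : 0 ≤ r) (hrp : 2 * r ^ p < 1)
    {x : ℝ → ℝ} (hx : ∀ n k : ℕ, |x ((k + 1) / 2 ^ n) - x (k / 2 ^ n)| ≤ C * r ^ n) (t : ℝ) :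
    Tendsto (fun n => dyadicSum p x n t) atTop (nhds 0) := by
  have hC : 0 ≤ C := by simpa using (abs_nonneg _).trans (hx 0 0)
  have hbound : ∀ n, dyadicSum p x n t ≤ C ^ p * (2 * r ^ p) ^ n := fun n => by
    refine (dyadicSum_le hp (hx n) t).trans_eq ?_
    rw [Real.mul_rpow hC (by positivity), ← Real.rpow_pow_comm hr, mul_pow]
    ring
  have hlim := (tendsto_pow_atTop_nhds_zero_of_lt_one (by positivity) hrp).const_mul (C ^ p)
  rw [mul_zero] at hlim
  exact squeeze_zero (dyadicSum_nonneg x · t) hbound hlim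

theorem stmt15_general (H p : ℝ) (hH : H ∈ Set.Ioo (0:ℝ) 1) (hp : 1/H < p)
    (x : ℝ → ℝ) (hx : MemX H x) (t : ℝ) :
    Tendsto (fun n => dyadicSum p x n t) atTop (nhds 0) := by
  have hHp : 1 < H * p := by rwa [div_lt_iff₀ hH.1, mul_comm] at hp
  have hp₀ : 0 ≤ p := by nlinarith [hH.1]
  refine tendsto_dyadicSum_zero hp₀ (by positivity) ?_ (hx.abs_sub_le hH) t
  calc 2 * ((2 : ℝ) ^ (-H)) ^ p = 2 ^ (1 - H * p) := by
        rw [← Real.rpow_mul zero_le_two, Real.rpow_sub two_pos, Real.rpow_one, neg_mul,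
          Real.rpow_neg zero_le_two]
        ring
    _ < 1 := Real.rpow_lt_one_of_one_lt_of_neg one_lt_two (by linarith)

theorem stmt15 (H p : ℝ) (hH : H ∈ Set.Ioo (0:ℝ) 1) (hp : 1/H < p)
    (x : ℝ → ℝ) (hx : MemX H x) (t : ℝ) (ht : t ∈ Set.Ioc (0:ℝ) 1) :
    Tendsto (fun n => dyadicSum p x n t) atTop (nhds 0) :=
  stmt15_general H p hH hp x hx t
end
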